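/- Let V be a finite-dimensional vector space over a field K of characteristic 0, T : V × V × V → K a symmetric trilinear form, and b : V → K a nonzero linear functional. Suppose that for every w ∈ V, the linear functional T(w, w, ·) is a scalar multiple of b. Then there exists c ∈ K such that T(u, v, w) = c·b(u)b(v)b(w) for all u, v, w; in particular the associated cubic form Ψ(w) = T(w,w,w) equals c·b(w)³ (a cube of a linear form). -/
import Mathlib


/-- If `T` is a symmetric trilinear form on a finite-dimensional vector space
over a field of characteristic 0, `b` a nonzero linear functional, and for every
`w` the functional `T(w,w,·)` is a multiple of `b`, then `T = c·b⊗b⊗b` for some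
scalar `c`; in particular the cubic form `Ψ(w) = T(w,w,w)` is `c·b(w)³`. -/
theorem stmt_6 (K : Type*) [Field K] [CharZero K] (V : Type*) [AddCommGroup V]
    [Module K V] [FiniteDimensional K V]
    (T : V →ₗ[K] V →ₗ[K] V →ₗ[K] K)
    (hsymm12 : ∀ u v w : V, T u v w = T v u w)
    (hsymm23 : ∀ u v w : V, T u v w = T u w v)
    (b : V →ₗ[K] K) (hb : b ≠ 0)
    (hmult : ∀ w : V, ∃ lam : K, ∀ v : V, T w w v = lam * b v) :
    ∃ c : K, (∀ u v w : V, T u v w = c * b u * b v * b w) ∧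
      ∀ w : V, T w w w = c * (b w) ^ 3 := by
  obtain ⟨w0, hw0⟩ : ∃ w0, b w0 ≠ 0 := by
    by_contra h
    push_neg at h
    exact hb (LinearMap.ext fun x => by simpa using h x)
  set e := (b w0)⁻¹ • w0 with he
  have hbe : b e = 1 := by simp [he, inv_mul_cancel₀ hw0]
  have h1 : ∀ w v, T w w v = T w w e * b v := by
    intro w v
    obtain ⟨lam, hlam⟩ := hmult w
    rw [hlam v, hlam e, hbe, mul_one]
  have hexp : ∀ u v x : V, T (u + v) (u + v) x = T u u x + 2 * T u v x + T v v x := by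
    intro u v x
    simp only [map_add, LinearMap.add_apply]
    rw [hsymm12 v u x]
    ring
  have h2 : ∀ u v x, T u v x = T u v e * b x := by
    intro u v x
    have e1 := h1 (u + v) x
    rw [hexp u v x, hexp u v e, h1 u x, h1 v x] at e1
    have h2' : (2 : K) * T u v x = 2 * (T u v e * b x) := by linear_combination e1
    exact mul_left_cancel₀ two_ne_zero h2'
  have main : ∀ u v w : V, T u v w = T e e e * b u * b v * b w := by
    intro u v w
    calc T u v w = T u v e * b w := h2 u v w
      _ = T u e v * b w := by rw [hsymm23 u v e]
      _ = T u e e * b v * b w := by rw [h2 u e v]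
      _ = T e e u * b v * b w := by rw [hsymm12 u e e, hsymm23 e u e]
      _ = T e e e * b u * b v * b w := by rw [h2 e e u]
  exact ⟨T e e e, main, fun w => by rw [main w w w]; ring⟩
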